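/- arXiv:2412.09894 — 5 statements merged into one kernel-verified Lean document; each statement's English description precedes it below -/
import Mathlib

section
/- Let K_1, …, K_N ⊆ F be convex and nonempty and let 𝒦^ind := { f ∈ F^N : f_n ∈ K_n for all n } be the independent model set. Fix p ∈ [1, ∞]. Suppose that for each n ∈ [1:N], Δ_n^aff : ℝ^M → ℝ is an affine map that is an optimal recovery map for estimating γ_n from the observations λ relative to K_n, i.e. sup_{g ∈ K_n} |γ_n(g) − Δ_n^aff(λ(g))| ≤ sup_{g ∈ K_n} |γ_n(g) − Δ(λ(g))| for every map Δ : ℝ^M → ℝ (suprema in the extended reals). Then the affine map Δ^aff : ℝ^{M×N} → ℝ^N defined by Δ^aff(y) := (Δ_1^aff(y_1), …, Δ_N^aff(y_N)), where y_n ∈ ℝ^M denotes the n-th column of y, minimizes the worst-case error gwce_p(Δ) := sup_{f ∈ 𝒦^ind} ‖Γ(f) − Δ(Λ f)‖_{ℓ_p^N} over all maps Δ : ℝ^{M×N} → ℝ^N. -/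
/-!
Componentwise, the observations cannot distinguish two elements `g, g'` of `K n` with
`λ g = λ g'`, so half the gap `|γ n g - γ n g'| / 2` is a lower bound for any recovery map, and
a map centred on each fibre attains the supremum of these half-gaps; by optimality
`Δaff n` attains it too. Because the model set is a product, one may switch each component
independently to whichever of `g n`, `g' n` is farther from the estimate without changing the
observations, so the lower bounds combine into the `ℓ_p`-norm of the vector of half-gaps. This
vector dominates the error vector of `Δaff` up to a factor `t < 1`, and monotonicity of the
`ℓ_p`-norm in the moduli of the entries concludes.
-/

open scoped ENNReal

open WithLp in
theorem PiLp.norm_toLp_le_norm_toLp {ι : Type*} [Fintype ι] {β : ι → Type*}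
    [∀ i, SeminormedAddCommGroup (β i)] (p : ℝ≥0∞) {x y : ∀ i, β i}
    (h : ∀ i, ‖x i‖ ≤ ‖y i‖) : ‖toLp p x‖ ≤ ‖toLp p y‖ := by
  rcases p.trichotomy with rfl | rfl | hp
  · rw [PiLp.norm_eq_card, PiLp.norm_eq_card]
    exact_mod_cast Finset.card_le_card fun i => by
      simp only [Set.Finite.mem_toFinset]
      exact fun hx hy => hx (le_antisymm (hy ▸ h i) (norm_nonneg _))
  · rw [PiLp.norm_eq_ciSup, PiLp.norm_eq_ciSup]
    exact ciSup_mono (Set.finite_range _).bddAbove h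
  · rw [PiLp.norm_eq_sum hp, PiLp.norm_eq_sum hp]
    gcongr with i
    exact h i

theorem EReal.coe_le_of_forall_lt_one_mul_le {x : ℝ} {y : EReal}
    (h : ∀ t : ℝ, 0 ≤ t → t < 1 → ((t * x : ℝ) : EReal) ≤ y) : (x : EReal) ≤ y := by
  refine EReal.ge_of_forall_gt_iff_ge.mp fun z hz => ?_
  rcases le_or_gt z 0 with hz0 | hz0
  · exact (EReal.coe_le_coe_iff.mpr hz0).trans (by simpa using h 0 le_rfl one_pos)
  · have hx0 : 0 < x := hz0.trans (EReal.coe_lt_coe_iff.mp hz)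
    simpa [div_mul_cancel₀ z hx0.ne'] using
      h (z / x) (by positivity) ((div_lt_one hx0).mpr (EReal.coe_lt_coe_iff.mp hz))

theorem abs_sub_div_two_le_max (a b c : ℝ) : |a - b| / 2 ≤ max |a - c| |b - c| := by
  have := abs_sub_le a c b
  rw [abs_sub_comm c b] at this
  linarith [le_max_left |a - c| |b - c|, le_max_right |a - c| |b - c|]

section Recovery

variable {F Y : Type*}

def IsOptimalRecovery (K : Set F) (obs : F → Y) (γ : F → ℝ) (Δ₀ : Y → ℝ) : Prop :=
  ∀ Δ : Y → ℝ, (⨆ g ∈ K, ((|γ g - Δ₀ (obs g)| : ℝ) : EReal)) ≤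
    ⨆ g ∈ K, ((|γ g - Δ (obs g)| : ℝ) : EReal)

variable {K : Set F} {obs : F → Y} {γ : F → ℝ}

theorem exists_abs_sub_le_of_forall_obs_eq {s : ℝ}
    (h : ∀ g ∈ K, ∀ g' ∈ K, obs g = obs g' → |γ g - γ g'| ≤ 2 * s) :
    ∃ Δ : Y → ℝ, ∀ g ∈ K, |γ g - Δ (obs g)| ≤ s := by
  -- every value of `γ` on the fibre over `y` lies in `[inf, inf + 2 * s]`
  refine ⟨fun y => sInf (γ '' {g ∈ K | obs g = y}) + s, fun g hg => ?_⟩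
  have hmem : γ g ∈ γ '' {g' ∈ K | obs g' = obs g} := ⟨g, ⟨hg, rfl⟩, rfl⟩
  have hlb : ∀ t ∈ γ '' {g' ∈ K | obs g' = obs g}, γ g - 2 * s ≤ t := by
    rintro _ ⟨g', ⟨hg', hobs⟩, rfl⟩
    linarith [le_abs_self (γ g - γ g'), h g hg g' hg' hobs.symm]
  have h₁ := csInf_le ⟨_, hlb⟩ hmem
  have h₂ := le_csInf ⟨_, hmem⟩ hlb
  rw [abs_le]
  constructor <;> linarith

theorem IsOptimalRecovery.exists_obs_eq_lt_abs_sub {Δ₀ : Y → ℝ}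
    (hopt : IsOptimalRecovery K obs γ Δ₀) {f : F} (hf : f ∈ K) {s : ℝ}
    (hs : s < |γ f - Δ₀ (obs f)|) :
    ∃ g ∈ K, ∃ g' ∈ K, obs g = obs g' ∧ 2 * s < |γ g - γ g'| := by
  by_contra! h
  obtain ⟨Δ, hΔ⟩ := exists_abs_sub_le_of_forall_obs_eq h
  have : ((|γ f - Δ₀ (obs f)| : ℝ) : EReal) ≤ s :=
    (le_iSup₂_of_le f hf le_rfl).trans ((hopt Δ).trans (iSup₂_le fun g hg => by
      exact_mod_cast hΔ g hg))
  exact hs.not_ge (mod_cast this)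

theorem IsOptimalRecovery.exists_obs_eq_mul_abs_sub_le {Δ₀ : Y → ℝ}
    (hopt : IsOptimalRecovery K obs γ Δ₀) {f : F} (hf : f ∈ K) {t : ℝ} (ht : t < 1) :
    ∃ g ∈ K, ∃ g' ∈ K, obs g = obs g' ∧ t * |γ f - Δ₀ (obs f)| ≤ |γ g - γ g'| / 2 := by
  rcases (abs_nonneg (γ f - Δ₀ (obs f))).eq_or_lt with h0 | hpos
  · exact ⟨f, hf, f, hf, rfl, by simp [← h0]⟩
  · obtain ⟨g, hg, g', hg', hobs, hlt⟩ :=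
      hopt.exists_obs_eq_lt_abs_sub hf (mul_lt_of_lt_one_left hpos ht)
    exact ⟨g, hg, g', hg', hobs, by linarith⟩

end Recovery

open WithLp in
theorem abs_sub_div_two_norm_le_iSup_norm_sub {ι F Y : Type*} [Fintype ι] (p : ℝ≥0∞)
    {K : ι → Set F} {obs : F → Y} (γ : ι → F → ℝ) (Δ : (ι → Y) → ι → ℝ) {g g' : ι → F}
    (hg : ∀ n, g n ∈ K n) (hg' : ∀ n, g' n ∈ K n) (hobs : ∀ n, obs (g n) = obs (g' n)) :
    ((‖toLp p (fun n => |γ n (g n) - γ n (g' n)| / 2)‖ : ℝ) : EReal) ≤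
      ⨆ f ∈ {f : ι → F | ∀ n, f n ∈ K n},
        ((‖toLp p (fun n => γ n (f n) - Δ (fun n => obs (f n)) n)‖ : ℝ) : EReal) := by
  set c := Δ (fun n => obs (g n))
  -- In each component, keep whichever of `g n`, `g' n` is farther from the estimate `c n`;
  -- the observations, hence the estimate, do not change.
  let f : ι → F := fun n => if |γ n (g' n) - c n| ≤ |γ n (g n) - c n| then g n else g' n
  have hfK : ∀ n, f n ∈ K n := fun n => by unfold f; split_ifs <;> simp [hg, hg']
  have hfobs : (fun n => obs (f n)) = fun n => obs (g n) := by
    funext n; unfold f; split_ifs <;> simp [hobs]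
  refine le_iSup₂_of_le f hfK
    (EReal.coe_le_coe_iff.mpr (PiLp.norm_toLp_le_norm_toLp p fun n => ?_))
  rw [hfobs, Real.norm_eq_abs, Real.norm_eq_abs, abs_of_nonneg (by positivity)]
  refine (abs_sub_div_two_le_max _ _ (c n)).trans ?_
  unfold f; split_ifs with h
  · exact max_le le_rfl h
  · exact max_le (not_le.mp h).le le_rfl

open WithLp in
theorem stmt_3_general {F : Type*} [AddCommGroup F] [Module ℝ F] {M N : ℕ}
    (lam : Fin M → F →ₗ[ℝ] ℝ) (γ : Fin N → F →ₗ[ℝ] ℝ)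
    (K : Fin N → Set F)
    (p : ℝ≥0∞) [Fact (1 ≤ p)]
    (Δaff : Fin N → ((Fin M → ℝ) →ᵃ[ℝ] ℝ))
    (hopt : ∀ n, ∀ Δ : (Fin M → ℝ) → ℝ,
      (⨆ g ∈ K n, ((|γ n g - Δaff n (fun m => lam m g)| : ℝ) : EReal)) ≤
        ⨆ g ∈ K n, ((|γ n g - Δ (fun m => lam m g)| : ℝ) : EReal)) :
    ∀ Δ : (Fin M → Fin N → ℝ) → (Fin N → ℝ),
      (⨆ f ∈ {f : Fin N → F | ∀ n, f n ∈ K n},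
        ((‖(WithLp.equiv p (Fin N → ℝ)).symm
            (fun n => γ n (f n) - Δaff n (fun m => lam m (f n)))‖ : ℝ) : EReal)) ≤
      ⨆ f ∈ {f : Fin N → F | ∀ n, f n ∈ K n},
        ((‖(WithLp.equiv p (Fin N → ℝ)).symm
            (fun n => γ n (f n) - Δ (fun m n => lam m (f n)) n)‖ : ℝ) : EReal) := by
  intro Δ
  refine iSup₂_le fun f hf => EReal.coe_le_of_forall_lt_one_mul_le fun t ht0 ht1 => ?_
  have hopt' : ∀ n, IsOptimalRecovery (K n) (fun g m => lam m g) (γ n) (Δaff n) := hopt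
  choose g hg g' hg' hobs hle using fun n => (hopt' n).exists_obs_eq_mul_abs_sub_le (hf n) ht1
  set a := fun n => γ n (f n) - Δaff n (fun m => lam m (f n))
  calc ((t * ‖toLp p a‖ : ℝ) : EReal)
      = ‖toLp p (t • a)‖ := by
        rw [toLp_smul, norm_smul, Real.norm_of_nonneg ht0]
    _ ≤ ‖toLp p (fun n => |γ n (g n) - γ n (g' n)| / 2)‖ := by
        refine EReal.coe_le_coe_iff.mpr (PiLp.norm_toLp_le_norm_toLp p fun n => ?_)
        simpa [a, abs_mul, abs_of_nonneg ht0] using hle n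
    _ ≤ _ := abs_sub_div_two_norm_le_iSup_norm_sub p (fun n => ⇑(γ n))
        (obs := fun g m => lam m g) (fun (y : Fin N → Fin M → ℝ) => Δ (fun m n => y n m))
        hg hg' hobs

/-- Proposition 2.1 of the paper: for the independent model set, assembling componentwise
affine optimal recovery maps yields a recovery map minimizing the `ℓ_p` worst-case error. -/
theorem stmt_3 {F : Type*} [AddCommGroup F] [Module ℝ F] {M N : ℕ}
    (lam : Fin M → F →ₗ[ℝ] ℝ) (γ : Fin N → F →ₗ[ℝ] ℝ)
    (K : Fin N → Set F) (hK : ∀ n, Convex ℝ (K n)) (hKne : ∀ n, (K n).Nonempty)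
    (p : ℝ≥0∞) [Fact (1 ≤ p)]
    (Δaff : Fin N → ((Fin M → ℝ) →ᵃ[ℝ] ℝ))
    (hopt : ∀ n, ∀ Δ : (Fin M → ℝ) → ℝ,
      (⨆ g ∈ K n, ((|γ n g - Δaff n (fun m => lam m g)| : ℝ) : EReal)) ≤
        ⨆ g ∈ K n, ((|γ n g - Δ (fun m => lam m g)| : ℝ) : EReal)) :
    ∀ Δ : (Fin M → Fin N → ℝ) → (Fin N → ℝ),
      (⨆ f ∈ {f : Fin N → F | ∀ n, f n ∈ K n},
        ((‖(WithLp.equiv p (Fin N → ℝ)).symm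
            (fun n => γ n (f n) - Δaff n (fun m => lam m (f n)))‖ : ℝ) : EReal)) ≤
      ⨆ f ∈ {f : Fin N → F | ∀ n, f n ∈ K n},
        ((‖(WithLp.equiv p (Fin N → ℝ)).symm
            (fun n => γ n (f n) - Δ (fun m n => lam m (f n)) n)‖ : ℝ) : EReal) :=
  stmt_3_general lam γ K p Δaff hopt
end

section
/- Let K_1, …, K_N ⊆ F be convex, let A ∈ ℝ^{L×N} and b ∈ F^L, and let 𝒦^dep := { f ∈ F^N : f_n ∈ K_n for all n, and Σ_{n=1}^N a_{ℓ,n} f_n = b_ℓ for all ℓ ∈ [1:L] } be the dependent model set, assumed nonempty. Then there exists an affine map Δ^aff : ℝ^{M×N} → ℝ^N (i.e. of the form Δ^aff(y) = Σ_{m=1}^M Σ_{n=1}^N y_{m,n} c^{(m,n)} + d with c^{(m,n)}, d ∈ ℝ^N) that minimizes the ℓ_∞ worst-case error gwce_∞(Δ) := sup_{f ∈ 𝒦^dep} ‖Γ(f) − Δ(Λ f)‖_{ℓ_∞^N} over all maps Δ : ℝ^{M×N} → ℝ^N. -/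
/-!
If two admissible `f, g` have the same data `Λ f = Λ g`, every recovery map `Δ` makes an error
of at least `|γ_k (f k) - γ_k (g k)| / 2` on one of them, so the optimal worst-case error `ρ`
bounds all these half-widths. Conversely, for each coordinate `k` the image of the (convex)
model set under `f ↦ (Λ f, γ_k (f k))` is a convex set whose vertical chords have length at most
`2ρ`. The M. Riesz extension theorem, applied to the cone generated by `2ρ • (0, 1) + (C - C)`,
yields a linear functional `ψ` with `ψ (0, 1) = 1` and oscillation at most `2ρ` on `C`; writing
`ψ (y, z) = z - a y` and centering gives an affine `a_k` with `|γ_k (f k) - a_k (Λ f)| ≤ ρ`.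
-/

section

open scoped Pointwise

lemma LinearMap.sum_sum_smul_single {ι κ R W : Type*} [Fintype ι] [DecidableEq ι] [Fintype κ]
    [DecidableEq κ] [Semiring R] [AddCommMonoid W] [Module R W] (A : (ι → κ → R) →ₗ[R] W)
    (y : ι → κ → R) :
    ∑ i, ∑ j, y i j • A (Pi.single i (Pi.single j 1)) = A y := by
  have hy : y = ∑ i, ∑ j, y i j • Pi.single i (Pi.single j 1) := by
    ext i j
    simp [Finset.sum_apply, Pi.single_apply, apply_ite (fun g : κ → R => g j)]
  conv_rhs => rw [hy]
  simp only [map_sum, map_smul]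

lemma Real.exists_abs_sub_le_of_sub_le {α : Type*} {X : Set α} (h : α → ℝ) {r : ℝ}
    (hosc : ∀ x ∈ X, ∀ y ∈ X, h x - h y ≤ 2 * r) : ∃ b, ∀ x ∈ X, |h x - b| ≤ r := by
  rcases X.eq_empty_or_nonempty with rfl | ⟨x₀, hx₀⟩
  · exact ⟨0, by simp⟩
  have hbdd : BddAbove (h '' X) := ⟨h x₀ + 2 * r, by
    rintro _ ⟨y, hy, rfl⟩
    linarith [hosc y hy x₀ hx₀]⟩
  refine ⟨sSup (h '' X) - r, fun x hx => abs_le.2 ⟨?_, ?_⟩⟩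
  · have : sSup (h '' X) ≤ h x + 2 * r :=
      csSup_le ⟨_, x₀, hx₀, rfl⟩ (by rintro _ ⟨y, hy, rfl⟩; linarith [hosc y hy x hx])
    linarith
  · linarith [le_csSup hbdd ⟨x, hx, rfl⟩]

variable {E : Type*} [AddCommGroup E] [Module ℝ E]

lemma PointedCone.exists_mem_smul_of_mem_hull {C : Set E} (hC : Convex ℝ C) (hne : C.Nonempty)
    {x : E} (hx : x ∈ PointedCone.hull ℝ C) : ∃ l : ℝ, 0 ≤ l ∧ x ∈ l • C := by
  induction hx using Submodule.span_induction with
  | mem x hx => exact ⟨1, zero_le_one, by simpa using hx⟩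
  | zero => exact ⟨0, le_rfl, by simp [Set.zero_smul_set hne]⟩
  | add x y _ _ hx hy =>
    obtain ⟨l₁, hl₁, hx⟩ := hx
    obtain ⟨l₂, hl₂, hy⟩ := hy
    exact ⟨l₁ + l₂, add_nonneg hl₁ hl₂, hC.add_smul hl₁ hl₂ ▸ Set.add_mem_add hx hy⟩
  | smul a x _ hx =>
    obtain ⟨l, hl, hx⟩ := hx
    refine ⟨a * l, mul_nonneg a.2 hl, ?_⟩
    rw [mul_smul]
    exact Set.smul_mem_smul_set hx

theorem PointedCone.exists_linearMap_apply_eq_one_nonneg_of_mem (P : PointedCone ℝ E)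
    (S : Submodule ℝ E) {e : E} (heS : e ∈ S) (hpos : ∀ c : ℝ, c • e ∈ P → 0 ≤ c)
    (hdense : ∀ y ∈ S, ∃ c : ℝ, c • e + y ∈ P) :
    ∃ ψ : E →ₗ[ℝ] ℝ, ψ e = 1 ∧ ∀ x ∈ S, x ∈ P → 0 ≤ ψ x := by
  have he' : (⟨e, heS⟩ : S) ≠ 0 := by
    rintro h
    linarith [hpos (-1) (by simp [show e = 0 by simpa using h])]
  set f : S →ₗ.[ℝ] ℝ := LinearPMap.mkSpanSingleton (⟨e, heS⟩ : S) (1 : ℝ) he'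
  have hf : ∀ x : f.domain, (x : S) ∈ P.comap S.subtype → 0 ≤ f x := by
    rintro ⟨_, hx⟩ hxP
    obtain ⟨c, rfl⟩ := Submodule.mem_span_singleton.1 hx
    rw [show f ⟨c • _, hx⟩ = c • (1 : ℝ) from LinearPMap.mkSpanSingleton'_apply _ _ _ c hx,
      smul_eq_mul, mul_one]
    exact hpos c (PointedCone.mem_comap.1 hxP)
  have hdense' : ∀ y : S, ∃ x : f.domain, (x : S) + y ∈ P.comap S.subtype := by
    rintro ⟨y, hy⟩
    obtain ⟨c, hc⟩ := hdense y hy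
    exact ⟨⟨c • (⟨e, heS⟩ : S), Submodule.smul_mem _ _ (Submodule.mem_span_singleton_self _)⟩,
      PointedCone.mem_comap.2 hc⟩
  obtain ⟨g, hgf, hgP⟩ := riesz_extension (P.comap S.subtype) f hf hdense'
  obtain ⟨ψ, hψ⟩ := LinearMap.exists_extend g
  have hψS : ∀ y (hy : y ∈ S), ψ y = g ⟨y, hy⟩ := fun y hy => LinearMap.congr_fun hψ ⟨y, hy⟩
  refine ⟨ψ, ?_, fun x hxS hx => ?_⟩
  · rw [hψS e heS]
    exact (hgf ⟨_, Submodule.mem_span_singleton_self _⟩).trans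
      (LinearPMap.mkSpanSingleton_apply ℝ ℝ he' 1)
  · rw [hψS x hxS]
    exact hgP ⟨x, hxS⟩ hx

theorem PointedCone.exists_linearMap_apply_eq_one_nonneg (P : PointedCone ℝ E) {e : E}
    (hpos : ∀ c : ℝ, c • e ∈ P → 0 ≤ c)
    (hneg : ∀ (c : ℝ) (y : E), c • e + y ∈ P → ∃ c' : ℝ, c' • e + -y ∈ P) :
    ∃ ψ : E →ₗ[ℝ] ℝ, ψ e = 1 ∧ ∀ x ∈ P, 0 ≤ ψ x := by
  have hnonneg : ∀ {a : ℝ} {y : E}, 0 ≤ a → (∃ c : ℝ, c • e + y ∈ P) →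
      ∃ c : ℝ, c • e + a • y ∈ P :=
    fun {a _} ha ⟨c, h⟩ => ⟨a * c, by convert P.smul_mem ha h using 1; module⟩
  let S : Submodule ℝ E :=
    { carrier := {y | ∃ c : ℝ, c • e + y ∈ P}
      add_mem' := fun ⟨c₁, h₁⟩ ⟨c₂, h₂⟩ => ⟨c₁ + c₂, by convert P.add_mem h₁ h₂ using 1; module⟩
      zero_mem' := ⟨0, by simp⟩
      smul_mem' := fun a y ⟨c, h⟩ => by
        rcases le_total 0 a with ha | ha
        · exact hnonneg ha ⟨c, h⟩
        · simpa using hnonneg (neg_nonneg.2 ha) (hneg c y h) }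
  obtain ⟨ψ, hψe, hψ⟩ := P.exists_linearMap_apply_eq_one_nonneg_of_mem S ⟨-1, by simp⟩ hpos
    fun _ hy => hy
  exact ⟨ψ, hψe, fun x hx => hψ x ⟨0, by simpa using hx⟩ hx⟩

theorem exists_linearMap_apply_eq_one_le {D : Set E} (hD : Convex ℝ D)
    (hD_neg : ∀ d ∈ D, -d ∈ D) (hD₀ : (0 : E) ∈ D) {e : E} {s : ℝ}
    (hs : ∀ t : ℝ, t • e ∈ D → t ≤ s) : ∃ ψ : E →ₗ[ℝ] ℝ, ψ e = 1 ∧ ∀ d ∈ D, ψ d ≤ s := by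
  set P := PointedCone.hull ℝ ((s • e + ·) '' D)
  have hP : ∀ {x}, x ∈ P → ∃ l : ℝ, 0 ≤ l ∧ ∃ d ∈ D, x = l • (s • e + d) := by
    intro x hx
    obtain ⟨l, hl, _, ⟨d, hd, rfl⟩, rfl⟩ :=
      PointedCone.exists_mem_smul_of_mem_hull (hD.translate _) ⟨_, 0, hD₀, rfl⟩ hx
    exact ⟨l, hl, d, hd, rfl⟩
  have hgen : ∀ d ∈ D, s • e + d ∈ P := fun d hd => PointedCone.subset_hull ⟨d, hd, rfl⟩
  have hpos : ∀ c : ℝ, c • e ∈ P → 0 ≤ c := by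
    intro c hc
    obtain ⟨l, hl, d, hd, hcd⟩ := hP hc
    -- For `c < 0`, solving `c • e = l • (s • e + d)` for `-d` gives a multiple of `e` beyond `s`.
    by_contra! hc
    have he : e ≠ 0 := by
      rintro rfl
      linarith [hs (s + 1) (by simpa using hD₀)]
    have hl : 0 < l := hl.lt_of_ne (by rintro rfl; simp [hc.ne, he] at hcd)
    have hmem : (s - c / l) • e ∈ D := by
      convert hD_neg d hd using 1
      rw [← smul_right_inj hl.ne', smul_smul, mul_sub, mul_div_cancel₀ _ hl.ne']
      linear_combination (norm := module) -hcd
    linarith [hs _ hmem, div_neg_of_neg_of_pos hc hl]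
  have hneg : ∀ (c : ℝ) (y : E), c • e + y ∈ P → ∃ c' : ℝ, c' • e + -y ∈ P := by
    intro c y h
    obtain ⟨l, hl, d, hd, hy⟩ := hP h
    refine ⟨2 * l * s - c, ?_⟩
    convert P.smul_mem hl (hgen _ (hD_neg d hd)) using 1
    linear_combination (norm := module) -hy
  obtain ⟨ψ, hψe, hψP⟩ := P.exists_linearMap_apply_eq_one_nonneg hpos hneg
  refine ⟨ψ, hψe, fun d hd => ?_⟩
  have := hψP _ (hgen _ (hD_neg d hd))
  rw [map_add, map_smul, map_neg, hψe, smul_eq_mul, mul_one] at this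
  linarith

theorem exists_linearMap_abs_sub_le {V Y : Type*} [AddCommGroup V] [Module ℝ V] [AddCommGroup Y]
    [Module ℝ Y] {X : Set V} (hX : Convex ℝ X) (hXne : X.Nonempty) (φ : V →ₗ[ℝ] Y)
    (q : V →ₗ[ℝ] ℝ) {r : ℝ} (hr : ∀ x ∈ X, ∀ y ∈ X, φ x = φ y → q x - q y ≤ 2 * r) :
    ∃ (a : Y →ₗ[ℝ] ℝ) (b : ℝ), ∀ x ∈ X, |q x - (a (φ x) + b)| ≤ r := by
  set C := φ.prod q '' X
  have hC : Convex ℝ C := hX.linear_image _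
  obtain ⟨ψ, hψe, hψ⟩ := exists_linearMap_apply_eq_one_le (hC.sub hC)
    (by rintro _ ⟨u, hu, v, hv, rfl⟩; exact ⟨v, hv, u, hu, (neg_sub u v).symm⟩)
    (by obtain ⟨u, hu⟩ := hXne.image (φ.prod q); exact ⟨u, hu, u, hu, sub_self u⟩)
    (e := ((0 : Y), (1 : ℝ))) (s := 2 * r) (by
      rintro t ⟨_, ⟨x, hx, rfl⟩, _, ⟨y, hy, rfl⟩, hxy⟩
      obtain ⟨hφ, hq⟩ := Prod.ext_iff.1 hxy
      simp only [LinearMap.prod_apply, Prod.fst_sub, Prod.snd_sub, Prod.smul_mk,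
        smul_zero, smul_eq_mul, mul_one, sub_eq_zero] at hφ hq
      exact hq ▸ hr x hx y hy hφ)
  have hψ_apply : ∀ y z, ψ (y, z) = ψ (y, 0) + z := by
    intro y z
    rw [show ((y, z) : Y × ℝ) = (y, 0) + z • (0, 1) by simp, map_add, map_smul, hψe,
      smul_eq_mul, mul_one]
  obtain ⟨b, hb⟩ := Real.exists_abs_sub_le_of_sub_le (fun x => ψ (φ.prod q x)) (r := r)
    (fun x hx y hy => map_sub ψ _ _ ▸ hψ _ ⟨_, ⟨x, hx, rfl⟩, _, ⟨y, hy, rfl⟩, rfl⟩)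
  refine ⟨-(ψ ∘ₗ LinearMap.inl ℝ Y ℝ), b, fun x hx => ?_⟩
  convert hb x hx using 2
  rw [LinearMap.prod_apply, Function.prod, hψ_apply]
  simp only [LinearMap.neg_apply, LinearMap.comp_apply, LinearMap.inl_apply]
  ring

theorem exists_affine_norm_sub_le {V ι κ ν : Type*} [AddCommGroup V] [Module ℝ V] [Fintype ι]
    [DecidableEq ι] [Fintype κ] [DecidableEq κ] [Fintype ν] {X : Set V} (hX : Convex ℝ X)
    (hXne : X.Nonempty) (Λ : V →ₗ[ℝ] ι → κ → ℝ) (Q : ν → V →ₗ[ℝ] ℝ) {r : ℝ} (hr₀ : 0 ≤ r)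
    (hr : ∀ k, ∀ x ∈ X, ∀ y ∈ X, Λ x = Λ y → Q k x - Q k y ≤ 2 * r) :
    ∃ (c : ι → κ → ν → ℝ) (d : ν → ℝ),
      ∀ x ∈ X, ‖(fun k => Q k x) - ((∑ i, ∑ j, Λ x i j • c i j) + d)‖ ≤ r := by
  choose a d had using fun k => exists_linearMap_abs_sub_le hX hXne Λ (Q k) (hr k)
  refine ⟨fun i j => LinearMap.pi a (Pi.single i (Pi.single j 1)), d, fun x hx => ?_⟩
  rw [(LinearMap.pi a).sum_sum_smul_single (Λ x)]
  refine (pi_norm_le_iff_of_nonneg hr₀).2 fun k => ?_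
  simpa using had k x hx

lemma convex_setOf_forall_mem_and_sum_smul_eq {F ι κ : Type*} [AddCommGroup F] [Module ℝ F]
    [Fintype ι] {K : ι → Set F} (hK : ∀ i, Convex ℝ (K i)) (A : κ → ι → ℝ) (b : κ → F) :
    Convex ℝ {f : ι → F | (∀ i, f i ∈ K i) ∧ ∀ l, ∑ i, A l i • f i = b l} := by
  rintro f ⟨hfK, hfA⟩ g ⟨hgK, hgA⟩ s t hs ht hst
  refine ⟨fun i => hK i (hfK i) (hgK i) hs ht hst, fun l => ?_⟩
  simp only [Pi.add_apply, Pi.smul_apply, smul_add, smul_comm (A l _) s, smul_comm (A l _) t,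
    Finset.sum_add_distrib, ← Finset.smul_sum, hfA, hgA, ← add_smul, hst, one_smul]

lemma half_sub_le_iSup_norm_sub {α Y ι : Type*} [Fintype ι] {X : Set α} (Q : α → ι → ℝ)
    (obs : α → Y) (Δ : Y → ι → ℝ) {x y : α} (hx : x ∈ X) (hy : y ∈ X) (hxy : obs x = obs y)
    (k : ι) :
    (((Q x k - Q y k) / 2 : ℝ) : EReal) ≤ ⨆ z ∈ X, ((‖Q z - Δ (obs z)‖ : ℝ) : EReal) := by
  have hcomp : ∀ z, |Q z k - Δ (obs z) k| ≤ ‖Q z - Δ (obs z)‖ := fun z => by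
    simpa using norm_le_pi_norm (Q z - Δ (obs z)) k
  have : (Q x k - Q y k) / 2 ≤ ‖Q x - Δ (obs x)‖ ∨ (Q x k - Q y k) / 2 ≤ ‖Q y - Δ (obs y)‖ := by
    have hxk := hcomp x
    rw [hxy] at hxk ⊢
    by_contra! h
    linarith [le_abs_self (Q x k - Δ (obs y) k), neg_abs_le (Q y k - Δ (obs y) k), hcomp y]
  rcases this with h | h
  · exact (EReal.coe_le_coe_iff.2 h).trans (le_iSup₂_of_le x hx le_rfl)
  · exact (EReal.coe_le_coe_iff.2 h).trans (le_iSup₂_of_le y hy le_rfl)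

end

/-- Proposition 2.2 of the paper: for the dependent model set
`𝒦^dep = {f : f_n ∈ K_n, Σ_n a_{ℓ,n} f_n = b_ℓ}` with convex `K_n`, the `ℓ_∞` worst-case
error of prediction is minimized by an affine recovery map. -/
theorem stmt_4 {F : Type*} [AddCommGroup F] [Module ℝ F] {M N L : ℕ}
    (lam : Fin M → F →ₗ[ℝ] ℝ) (γ : Fin N → F →ₗ[ℝ] ℝ)
    (K : Fin N → Set F) (hK : ∀ n, Convex ℝ (K n))
    (A : Fin L → Fin N → ℝ) (b : Fin L → F)
    (Kdep : Set (Fin N → F))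
    (hKdep : Kdep = {f : Fin N → F | (∀ n, f n ∈ K n) ∧ ∀ ℓ, ∑ n, A ℓ n • f n = b ℓ})
    (hne : Kdep.Nonempty) :
    ∃ (c : Fin M → Fin N → (Fin N → ℝ)) (d : Fin N → ℝ),
      ∀ Δ : (Fin M → Fin N → ℝ) → (Fin N → ℝ),
        (⨆ f ∈ Kdep,
          ((‖(fun n => γ n (f n)) - ((∑ m, ∑ n, lam m (f n) • c m n) + d)‖ : ℝ) : EReal)) ≤
        ⨆ f ∈ Kdep,
          ((‖(fun n => γ n (f n)) - Δ (fun m n => lam m (f n))‖ : ℝ) : EReal) := by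
  let Λ : (Fin N → F) →ₗ[ℝ] Fin M → Fin N → ℝ :=
    LinearMap.pi fun m => LinearMap.pi fun n => lam m ∘ₗ LinearMap.proj n
  set ρ : EReal := ⨅ Δ : (Fin M → Fin N → ℝ) → (Fin N → ℝ),
    ⨆ f ∈ Kdep, ((‖(fun n => γ n (f n)) - Δ (fun m n => lam m (f n))‖ : ℝ) : EReal)
  suffices h : ∃ (c : Fin M → Fin N → (Fin N → ℝ)) (d : Fin N → ℝ),
      (⨆ f ∈ Kdep,
        ((‖(fun n => γ n (f n)) - ((∑ m, ∑ n, lam m (f n) • c m n) + d)‖ : ℝ) : EReal)) ≤ ρ by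
    obtain ⟨c, d, h⟩ := h
    exact ⟨c, d, fun Δ => h.trans (iInf_le _ Δ)⟩
  obtain ⟨f₀, hf₀⟩ := hne
  have hρ₀ : 0 ≤ ρ :=
    le_iInf fun Δ => (EReal.coe_nonneg.2 (norm_nonneg _)).trans (le_iSup₂_of_le f₀ hf₀ le_rfl)
  by_cases hρ : ρ = ⊤
  · exact ⟨0, 0, hρ ▸ le_top⟩
  obtain ⟨r, hr⟩ : ∃ r : ℝ, ρ = r :=
    ⟨ρ.toReal, (EReal.coe_toReal hρ (ne_bot_of_le_ne_bot (by simp) hρ₀)).symm⟩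
  have hr₀ : 0 ≤ r := EReal.coe_nonneg.1 (hr ▸ hρ₀)
  have hwidth : ∀ k, ∀ f ∈ Kdep, ∀ g ∈ Kdep, Λ f = Λ g → γ k (f k) - γ k (g k) ≤ 2 * r := by
    intro k f hf g hg hfg
    have : (((γ k (f k) - γ k (g k)) / 2 : ℝ) : EReal) ≤ r :=
      hr ▸ le_iInf fun Δ => half_sub_le_iSup_norm_sub (fun f n => γ n (f n)) Λ Δ hf hg hfg k
    linarith [EReal.coe_le_coe_iff.1 this]
  obtain ⟨c, d, hcd⟩ := exists_affine_norm_sub_le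
    (hKdep ▸ convex_setOf_forall_mem_and_sum_smul_eq hK A b) ⟨f₀, hf₀⟩ Λ
    (fun k => γ k ∘ₗ LinearMap.proj k) hr₀ hwidth
  exact ⟨c, d, hr ▸ iSup₂_le fun f hf => EReal.coe_le_coe_iff.2 (hcd f hf)⟩
end

section
/- Let F be a real vector space, K ⊆ F a nonempty convex set, λ_1, …, λ_M ∈ F* linear functionals with λ(f) := (λ_1(f), …, λ_M(f)) ∈ ℝ^M, and Γ ∈ F* a linear functional. Then there exist c ∈ ℝ^M and d ∈ ℝ such that for every map Δ : ℝ^M → ℝ: sup_{f ∈ K} | Γ(f) − ( Σ_{m=1}^M c_m λ_m(f) + d ) | ≤ sup_{f ∈ K} | Γ(f) − Δ(λ(f)) | (suprema taken in the extended reals). In other words, when the quantity of interest is a linear functional and the model set is convex, an affine recovery map is genuinely optimal. -/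
/-!
Let `r` be the supremum of `Γ f - Γ g` over pairs `f, g ∈ K` with `λ f = λ g`. A recovery map
takes the same value on both members of such a pair, so it errs by at least `r / 2` on one of
them. Conversely, `D = K - K` is convex and symmetric, and on the span of `λ(D)` the functional
`y ↦ inf {t r - Γ x : t > 0, x ∈ t D, λ x = y}` is finite, sublinear and nonnegative at `0`.
Hahn–Banach gives a linear `ℓ` below it, so `Γ + ℓ ∘ λ` varies by at most `r` on `K`, and
centring it yields an affine recovery map with error at most `r / 2`.
-/

open Set Pointwise

section

variable {F G : Type*} [AddCommGroup F] [Module ℝ F] [AddCommGroup G] [Module ℝ G]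

theorem Convex.exists_pos_mem_smul_of_mem_span {D : Set F} (hD : Convex ℝ D)
    (hneg : ∀ x ∈ D, -x ∈ D) (h0 : (0 : F) ∈ D) {x : F} (hx : x ∈ Submodule.span ℝ D) :
    ∃ t : ℝ, 0 < t ∧ x ∈ t • D := by
  induction hx using Submodule.span_induction with
  | mem x hx => exact ⟨1, one_pos, by rwa [one_smul]⟩
  | zero => exact ⟨1, one_pos, by rwa [one_smul]⟩
  | add x y _ _ hx hy =>
    obtain ⟨s, hs, hx⟩ := hx
    obtain ⟨t, ht, hy⟩ := hy
    exact ⟨s + t, add_pos hs ht, hD.add_smul hs.le ht.le ▸ add_mem_add hx hy⟩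
  | smul a x _ hx =>
    obtain ⟨t, ht, y, hy, rfl⟩ := hx
    rcases eq_or_ne a 0 with rfl | ha
    · exact ⟨1, one_pos, by rwa [zero_smul, one_smul]⟩
    refine ⟨|a| * t, by positivity, ?_⟩
    rcases abs_choice a with h | h
    · exact ⟨y, hy, by simp only [h, mul_smul]⟩
    · exact ⟨-y, hneg y hy, by simp only [h, mul_smul, smul_neg, neg_smul, neg_neg]⟩

def liftValues (D : Set F) (v : F →ₗ[ℝ] G) (Γ : F →ₗ[ℝ] ℝ) (r : ℝ) (y : G) : Set ℝ :=
  {z | ∃ t > 0, ∃ x ∈ t • D, v x = y ∧ t * r - Γ x = z}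

section liftValues

variable {D : Set F} {v : F →ₗ[ℝ] G} {Γ : F →ₗ[ℝ] ℝ} {r : ℝ}

theorem liftValues_add_subset (hD : Convex ℝ D) (y₁ y₂ : G) :
    liftValues D v Γ r y₁ + liftValues D v Γ r y₂ ⊆ liftValues D v Γ r (y₁ + y₂) := by
  rintro _ ⟨_, ⟨s, hs, x₁, hx₁, rfl, rfl⟩, _, ⟨t, ht, x₂, hx₂, rfl, rfl⟩, rfl⟩
  exact ⟨s + t, add_pos hs ht, x₁ + x₂, hD.add_smul hs.le ht.le ▸ add_mem_add hx₁ hx₂,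
    map_add v _ _, by rw [map_add]; ring⟩

theorem smul_liftValues_subset {c : ℝ} (hc : 0 < c) (y : G) :
    c • liftValues D v Γ r y ⊆ liftValues D v Γ r (c • y) := by
  rintro _ ⟨_, ⟨t, ht, x, hx, rfl, rfl⟩, rfl⟩
  refine ⟨c * t, mul_pos hc ht, c • x, ?_, map_smul v c x, ?_⟩
  · rw [mul_smul]
    exact smul_mem_smul_set hx
  · simp only [map_smul, smul_eq_mul]
    ring

theorem liftValues_smul {c : ℝ} (hc : 0 < c) (y : G) :
    liftValues D v Γ r (c • y) = c • liftValues D v Γ r y := by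
  refine (smul_liftValues_subset hc y).antisymm' ?_
  calc liftValues D v Γ r (c • y)
      = c • c⁻¹ • liftValues D v Γ r (c • y) := by rw [smul_smul, mul_inv_cancel₀ hc.ne', one_smul]
    _ ⊆ c • liftValues D v Γ r (c⁻¹ • c • y) :=
        smul_set_mono (smul_liftValues_subset (inv_pos.2 hc) _)
    _ = c • liftValues D v Γ r y := by rw [inv_smul_smul₀ hc.ne']

theorem nonneg_of_mem_liftValues_zero (hr : ∀ x ∈ D, v x = 0 → Γ x ≤ r) {z : ℝ}
    (hz : z ∈ liftValues D v Γ r 0) : 0 ≤ z := by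
  obtain ⟨t, ht, _, ⟨x, hx, rfl⟩, hvx, rfl⟩ := hz
  rw [map_smul, smul_eq_zero] at hvx
  have := hr x hx (hvx.resolve_left ht.ne')
  rw [map_smul, smul_eq_mul]
  nlinarith

theorem bddBelow_liftValues (hD : Convex ℝ D) (hr : ∀ x ∈ D, v x = 0 → Γ x ≤ r) {y : G}
    (hy : (liftValues D v Γ r (-y)).Nonempty) : BddBelow (liftValues D v Γ r y) := by
  obtain ⟨w, hw⟩ := hy
  refine ⟨-w, fun z hz => ?_⟩
  have := nonneg_of_mem_liftValues_zero hr
    (add_neg_cancel y ▸ liftValues_add_subset hD y (-y) (add_mem_add hz hw))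
  linarith

end liftValues

theorem Convex.exists_linearMap_le_comp_add {D : Set F} (hD : Convex ℝ D)
    (hneg : ∀ x ∈ D, -x ∈ D) (h0 : (0 : F) ∈ D) {v : F →ₗ[ℝ] G} {Γ : F →ₗ[ℝ] ℝ} {r : ℝ}
    (hr : ∀ x ∈ D, v x = 0 → Γ x ≤ r) :
    ∃ ℓ : G →ₗ[ℝ] ℝ, ∀ x ∈ D, Γ x ≤ ℓ (v x) + r := by
  set W := (Submodule.span ℝ D).map v
  have hne : ∀ y ∈ W, (liftValues D v Γ r y).Nonempty := by
    rintro _ ⟨x, hx, rfl⟩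
    obtain ⟨t, ht, hxt⟩ := hD.exists_pos_mem_smul_of_mem_span hneg h0 hx
    exact ⟨_, t, ht, x, hxt, rfl, rfl⟩
  have hbdd : ∀ y ∈ W, BddBelow (liftValues D v Γ r y) :=
    fun y hy => bddBelow_liftValues hD hr (hne _ (W.neg_mem hy))
  let N : W → ℝ := fun y => sInf (liftValues D v Γ r y)
  obtain ⟨Λ, -, hΛ⟩ := exists_extension_of_le_sublinear ((0 : W →ₗ[ℝ] ℝ).toPMap ⊥) N
    (fun c hc y => by simp only [N, Submodule.coe_smul, liftValues_smul hc,
      Real.sInf_smul_of_nonneg hc.le, smul_eq_mul])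
    (fun y₁ y₂ => by
      rw [← csInf_add (hne _ y₁.2) (hbdd _ y₁.2) (hne _ y₂.2) (hbdd _ y₂.2)]
      exact csInf_le_csInf (hbdd _ (y₁ + y₂).2) ((hne _ y₁.2).add (hne _ y₂.2))
        (liftValues_add_subset hD _ _))
    (fun y => by
      have hy : ((y : W) : G) = 0 := by simpa using y.2
      simp only [N, hy]
      exact le_csInf (hne 0 W.zero_mem) fun z => nonneg_of_mem_liftValues_zero hr)
  obtain ⟨ℓ, hℓ⟩ := LinearMap.exists_extend Λ
  refine ⟨-ℓ, fun x hx => ?_⟩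
  have hvx : v x ∈ W := Submodule.mem_map_of_mem (Submodule.subset_span hx)
  have : ℓ (v x) ≤ 1 * r - Γ x :=
    calc ℓ (v x) = Λ ⟨v x, hvx⟩ := LinearMap.congr_fun hℓ ⟨v x, hvx⟩
      _ ≤ N ⟨v x, hvx⟩ := hΛ _
      _ ≤ 1 * r - Γ x := csInf_le (hbdd _ hvx) ⟨1, one_pos, x, by rwa [one_smul], rfl, rfl⟩
  rw [LinearMap.neg_apply]
  linarith

theorem exists_abs_sub_le_half {ι : Type*} {K : Set ι} (hne : K.Nonempty) {φ : ι → ℝ} {r : ℝ}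
    (hφ : ∀ f ∈ K, ∀ g ∈ K, φ f - φ g ≤ r) : ∃ d, ∀ f ∈ K, |φ f - d| ≤ r / 2 := by
  obtain ⟨f₀, hf₀⟩ := hne
  have hbdd : BddAbove (φ '' K) :=
    ⟨φ f₀ + r, by rintro _ ⟨f, hf, rfl⟩; linarith [hφ f hf f₀ hf₀]⟩
  refine ⟨sSup (φ '' K) - r / 2, fun f hf => abs_le.2 ⟨?_, ?_⟩⟩
  · have : sSup (φ '' K) ≤ φ f + r :=
      csSup_le ⟨_, f₀, hf₀, rfl⟩ (by rintro _ ⟨g, hg, rfl⟩; linarith [hφ g hg f hf])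
    linarith
  · linarith [le_csSup hbdd ⟨f, hf, rfl⟩]

theorem Convex.exists_linearMap_abs_sub_le {K : Set F} (hK : Convex ℝ K) (hne : K.Nonempty)
    {v : F →ₗ[ℝ] G} {Γ : F →ₗ[ℝ] ℝ} {r : ℝ} (hr : ∀ f ∈ K, ∀ g ∈ K, v f = v g → Γ f - Γ g ≤ r) :
    ∃ (ℓ : G →ₗ[ℝ] ℝ) (d : ℝ), ∀ f ∈ K, |Γ f - (ℓ (v f) + d)| ≤ r / 2 := by
  obtain ⟨f₀, hf₀⟩ := hne
  obtain ⟨ℓ, hℓ⟩ := (hK.sub hK).exists_linearMap_le_comp_add (v := v) (Γ := Γ) (r := r)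
    (by rintro _ ⟨f, hf, g, hg, rfl⟩; exact ⟨g, hg, f, hf, (neg_sub f g).symm⟩)
    ⟨f₀, hf₀, f₀, hf₀, sub_self f₀⟩
    (by rintro _ ⟨f, hf, g, hg, rfl⟩ hfg
        rw [map_sub] at hfg ⊢
        exact hr f hf g hg (sub_eq_zero.1 hfg))
  obtain ⟨d, hd⟩ := exists_abs_sub_le_half ⟨f₀, hf₀⟩ (φ := fun f => Γ f - ℓ (v f)) (r := r)
    fun f hf g hg => by
      have := hℓ (f - g) ⟨f, hf, g, hg, rfl⟩
      simp only [map_sub] at this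
      linarith
  exact ⟨ℓ, d, fun f hf => by simpa only [sub_sub] using hd f hf⟩

def fibreSpread (K : Set F) (v : F →ₗ[ℝ] G) (Γ : F →ₗ[ℝ] ℝ) : Set ℝ :=
  {z | ∃ f ∈ K, ∃ g ∈ K, v f = v g ∧ Γ f - Γ g = z}

theorem two_mul_mem_upperBounds_fibreSpread {K : Set F} {v : F →ₗ[ℝ] G} {Γ : F →ₗ[ℝ] ℝ}
    {Δ : G → ℝ} {z : ℝ} (hz : ⨆ f ∈ K, ((|Γ f - Δ (v f)| : ℝ) : EReal) < z) :
    2 * z ∈ upperBounds (fibreSpread K v Γ) := by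
  have herr : ∀ f ∈ K, |Γ f - Δ (v f)| ≤ z := fun f hf =>
    EReal.coe_le_coe_iff.1 <| (le_iSup₂ (f := fun f (_ : f ∈ K) =>
      ((|Γ f - Δ (v f)| : ℝ) : EReal)) f hf).trans hz.le
  rintro _ ⟨f, hf, g, hg, hfg, rfl⟩
  have hg' := herr g hg
  rw [← hfg] at hg'
  linarith [abs_le.1 (herr f hf), abs_le.1 hg']

end

/-- Part (i-b) of the appendix proposition: for a convex model set and a linear-functional
quantity of interest, an affine recovery map is genuinely optimal. -/
theorem stmt_13 {F : Type*} [AddCommGroup F] [Module ℝ F] {M : ℕ}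
    (K : Set F) (hK : Convex ℝ K) (hne : K.Nonempty)
    (lam : Fin M → F →ₗ[ℝ] ℝ) (Γ : F →ₗ[ℝ] ℝ) :
    ∃ (c : Fin M → ℝ) (d : ℝ),
      ∀ Δ : (Fin M → ℝ) → ℝ,
        (⨆ f ∈ K, ((|Γ f - (∑ m, c m * lam m f + d)| : ℝ) : EReal)) ≤
          ⨆ f ∈ K, ((|Γ f - Δ (fun m => lam m f)| : ℝ) : EReal) := by
  set v : F →ₗ[ℝ] Fin M → ℝ := LinearMap.pi lam
  by_cases hS : BddAbove (fibreSpread K v Γ)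
  · obtain ⟨ℓ, d, hℓ⟩ := hK.exists_linearMap_abs_sub_le hne (r := sSup (fibreSpread K v Γ))
      fun f hf g hg hfg => le_csSup hS ⟨f, hf, g, hg, hfg, rfl⟩
    refine ⟨fun m => ℓ (fun j => if m = j then 1 else 0), d,
      fun Δ => EReal.le_of_forall_lt_iff_le.1 fun z hz => iSup₂_le fun f hf => ?_⟩
    obtain ⟨f₀, hf₀⟩ := hne
    have hr : sSup (fibreSpread K v Γ) ≤ 2 * z :=
      csSup_le ⟨0, f₀, hf₀, f₀, hf₀, rfl, sub_self _⟩ (two_mul_mem_upperBounds_fibreSpread hz)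
    have hsum : ∑ m, ℓ (fun j => if m = j then 1 else 0) * lam m f = ℓ (v f) := by
      simp only [ℓ.pi_apply_eq_sum_univ (v f), smul_eq_mul, mul_comm, v, LinearMap.pi_apply]
    rw [hsum]
    exact EReal.coe_le_coe_iff.2 ((hℓ f hf).trans (by linarith))
  · exact ⟨0, 0, fun Δ => EReal.le_of_forall_lt_iff_le.1 fun z hz =>
      absurd ⟨_, two_mul_mem_upperBounds_fibreSpread hz⟩ hS⟩
end

section
/- Let F be a real vector space, K ⊆ F a nonempty convex set that is symmetric about the origin (f ∈ K implies −f ∈ K), λ_1, …, λ_M ∈ F* linear functionals with λ(f) := (λ_1(f), …, λ_M(f)) ∈ ℝ^M, and Γ ∈ F* a linear functional. Then there exists c ∈ ℝ^M such that for every map Δ : ℝ^M → ℝ: sup_{f ∈ K} | Γ(f) − Σ_{m=1}^M c_m λ_m(f) | ≤ sup_{f ∈ K} | Γ(f) − Δ(λ(f)) | (suprema taken in the extended reals). In other words, for a convex symmetric model set and a linear-functional quantity of interest, a linear recovery map is optimal. -/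
/-!
Let `r` be the supremum of `Γ` over `K ∩ ker λ` (possibly `∞`). No recovery map `Δ` does better
than `r`: `f` and `-f` carry the same data `λ f = 0`, so `Δ` errs by at least `|Γ f|` on one of
them. Conversely, on the span of `λ(K)` the functional
`y ↦ inf {s (r + Γ f) | s > 0, f ∈ K, s λ f = y}` is sublinear (convexity of `K`) and finite
(symmetry of `K`), so Hahn–Banach yields a linear `L` with `L (λ f) ≤ r + Γ f` on `K`; applied to
`f` and `-f` this gives `|Γ f - L (λ f)| ≤ r`.
-/

open Set Submodule
open scoped Pointwise

section ScaledValues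

variable {F Y : Type*} [AddCommGroup F] [Module ℝ F] [AddCommGroup Y] [Module ℝ Y]

lemma exists_pos_smul_eq_of_mem_span {A : Set Y} (hA : Convex ℝ A) (h0 : 0 ∈ A)
    (hneg : ∀ a ∈ A, -a ∈ A) {y : Y} (hy : y ∈ span ℝ A) :
    ∃ s : ℝ, 0 < s ∧ ∃ a ∈ A, s • a = y := by
  induction hy using Submodule.span_induction with
  | mem a ha => exact ⟨1, one_pos, a, ha, one_smul ℝ a⟩
  | zero => exact ⟨1, one_pos, 0, h0, smul_zero 1⟩
  | add x y _ _ hx hy =>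
    obtain ⟨s, hs, a, ha, rfl⟩ := hx
    obtain ⟨t, ht, b, hb, rfl⟩ := hy
    have hst : 0 < s + t := add_pos hs ht
    refine ⟨s + t, hst, (s / (s + t)) • a + (t / (s + t)) • b,
      hA ha hb (by positivity) (by positivity) (by field_simp), ?_⟩
    simp only [smul_add, smul_smul, mul_div_cancel₀ _ hst.ne']
  | smul c x _ hx =>
    obtain ⟨s, hs, a, ha, rfl⟩ := hx
    rcases lt_trichotomy c 0 with hc | rfl | hc
    · exact ⟨-c * s, by nlinarith, -a, hneg a ha, by rw [smul_neg, ← neg_smul, smul_smul]; ring_nf⟩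
    · exact ⟨1, one_pos, 0, h0, by simp⟩
    · exact ⟨c * s, mul_pos hc hs, a, ha, (smul_smul c s a).symm⟩

variable (K : Set F) (Λ : F →ₗ[ℝ] Y) (Γ : F →ₗ[ℝ] ℝ) (r : ℝ)

def scaledValues (y : Y) : Set ℝ :=
  {z | ∃ s : ℝ, 0 < s ∧ ∃ f ∈ K, s • Λ f = y ∧ z = s * (r + Γ f)}

variable {K Λ Γ r}

lemma scaledValues_smul {c : ℝ} (hc : 0 < c) (y : Y) :
    scaledValues K Λ Γ r (c • y) = c • scaledValues K Λ Γ r y := by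
  ext z
  simp only [scaledValues, mem_smul_set, mem_ofPred_eq, smul_eq_mul]
  constructor
  · rintro ⟨s, hs, f, hf, hy, rfl⟩
    refine ⟨s / c * (r + Γ f), ⟨s / c, div_pos hs hc, f, hf, ?_, rfl⟩, by field_simp⟩
    rw [div_eq_inv_mul, mul_smul, hy, inv_smul_smul₀ hc.ne']
  · rintro ⟨_, ⟨s, hs, f, hf, rfl, rfl⟩, rfl⟩
    exact ⟨c * s, mul_pos hc hs, f, hf, mul_smul c s _, (mul_assoc c s _).symm⟩

lemma scaledValues_add_subset (hK : Convex ℝ K) (x y : Y) :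
    scaledValues K Λ Γ r x + scaledValues K Λ Γ r y ⊆ scaledValues K Λ Γ r (x + y) := by
  rintro _ ⟨_, ⟨s, hs, f, hf, rfl, rfl⟩, _, ⟨t, ht, g, hg, rfl, rfl⟩, rfl⟩
  have hst : 0 < s + t := add_pos hs ht
  refine ⟨s + t, hst, (s / (s + t)) • f + (t / (s + t)) • g,
    hK hf hg (by positivity) (by positivity) (by field_simp), ?_, ?_⟩
  · simp only [map_add, map_smul, smul_add, smul_smul, mul_div_cancel₀ _ hst.ne']
  · simp only [map_add, map_smul, smul_eq_mul]
    field_simp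
    ring

lemma mul_sub_le_of_mem_scaledValues (hK : Convex ℝ K) (hsym : ∀ f ∈ K, -f ∈ K)
    (hr : ∀ f ∈ K, Λ f = 0 → Γ f ≤ r) {f₀ : F} (hf₀ : f₀ ∈ K) {t : ℝ} (ht : 0 ≤ t) {z : ℝ}
    (hz : z ∈ scaledValues K Λ Γ r (t • Λ f₀)) : t * (Γ f₀ - r) ≤ z := by
  obtain ⟨s, hs, f, hf, hsf, rfl⟩ := hz
  have hst : 0 < t + s := by positivity
  -- a positive multiple of `t • f₀ - s • f` lies in `K ∩ ker Λ`
  have hg := hK hf₀ (hsym f hf) (div_nonneg ht hst.le) (div_nonneg hs.le hst.le)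
    (by field_simp)
  have hΛg : Λ ((t / (t + s)) • f₀ + (s / (t + s)) • -f) = 0 := by
    simp only [map_add, map_smul, map_neg, div_eq_inv_mul, mul_smul, smul_neg,
      hsf, add_neg_cancel]
  have hΓg := hr _ hg hΛg
  simp only [map_add, map_smul, map_neg, smul_eq_mul] at hΓg
  rw [div_mul_eq_mul_div, div_mul_eq_mul_div, ← add_div, div_le_iff₀ hst] at hΓg
  linarith

lemma scaledValues_nonempty_bddBelow (hK : Convex ℝ K) (h0 : 0 ∈ K) (hsym : ∀ f ∈ K, -f ∈ K)
    (hr : ∀ f ∈ K, Λ f = 0 → Γ f ≤ r) {y : Y} (hy : y ∈ span ℝ (Λ '' K)) :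
    (scaledValues K Λ Γ r y).Nonempty ∧ BddBelow (scaledValues K Λ Γ r y) := by
  obtain ⟨s, hs, _, ⟨f, hf, rfl⟩, rfl⟩ := exists_pos_smul_eq_of_mem_span (hK.linear_image Λ)
    ⟨0, h0, map_zero Λ⟩ (by rintro _ ⟨f, hf, rfl⟩; exact ⟨-f, hsym f hf, map_neg Λ f⟩) hy
  exact ⟨⟨_, s, hs, f, hf, rfl, rfl⟩,
    ⟨_, fun _ => mul_sub_le_of_mem_scaledValues hK hsym hr hf hs.le⟩⟩

theorem exists_linearMap_abs_sub_le_s14 (hK : Convex ℝ K) (h0 : 0 ∈ K) (hsym : ∀ f ∈ K, -f ∈ K)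
    (hr : ∀ f ∈ K, Λ f = 0 → Γ f ≤ r) : ∃ L : Y →ₗ[ℝ] ℝ, ∀ f ∈ K, |Γ f - L (Λ f)| ≤ r := by
  let C := span ℝ (Λ '' K)
  have hC (y : C) := scaledValues_nonempty_bddBelow hK h0 hsym hr y.2
  let N (y : C) : ℝ := sInf (scaledValues K Λ Γ r y)
  have hN_smul (c : ℝ) (hc : 0 < c) (y : C) : N (c • y) = c * N y := by
    simp only [N, coe_smul, scaledValues_smul hc, Real.sInf_smul_of_nonneg hc.le, smul_eq_mul]
  have hN_add (x y : C) : N (x + y) ≤ N x + N y := by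
    rw [← csInf_add (hC x).1 (hC x).2 (hC y).1 (hC y).2]
    exact csInf_le_csInf (hC (x + y)).2 ((hC x).1.add (hC y).1) (scaledValues_add_subset hK _ _)
  have hN_zero (y : (⟨⊥, 0⟩ : C →ₗ.[ℝ] ℝ).domain) : (⟨⊥, 0⟩ : C →ₗ.[ℝ] ℝ) y ≤ N y := by
    obtain ⟨y, hy⟩ := y
    rw [mem_bot] at hy
    subst hy
    refine le_csInf (hC 0).1 fun z hz => ?_
    simpa using mul_sub_le_of_mem_scaledValues hK hsym hr h0 le_rfl (by simpa using hz)
  obtain ⟨g, -, hgN⟩ := exists_extension_of_le_sublinear ⟨⊥, 0⟩ N hN_smul hN_add hN_zero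
  obtain ⟨L, hL⟩ := LinearMap.exists_extend g
  have hL_le (f : F) (hf : f ∈ K) : L (Λ f) ≤ r + Γ f := by
    let y : C := ⟨Λ f, subset_span (mem_image_of_mem Λ hf)⟩
    calc L (Λ f) = g y := LinearMap.congr_fun hL y
      _ ≤ N y := hgN y
      _ ≤ 1 * (r + Γ f) := csInf_le (hC y).2 ⟨1, one_pos, f, hf, one_smul ℝ _, rfl⟩
      _ = r + Γ f := one_mul _
  refine ⟨L, fun f hf => abs_le.2 ⟨?_, ?_⟩⟩
  · linarith [hL_le f hf]
  · have h := hL_le (-f) (hsym f hf)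
    rw [map_neg, map_neg, map_neg] at h
    linarith

theorem exists_linearMap_iSup_abs_sub_le (hK : Convex ℝ K) (h0 : 0 ∈ K)
    (hsym : ∀ f ∈ K, -f ∈ K) :
    ∃ L : Y →ₗ[ℝ] ℝ, (⨆ f ∈ K, ((|Γ f - L (Λ f)| : ℝ) : EReal)) ≤
      ⨆ f ∈ K, ⨆ _ : Λ f = 0, (Γ f : EReal) := by
  set R : EReal := ⨆ f ∈ K, ⨆ _ : Λ f = 0, (Γ f : EReal)
  have hR_le (f : F) (hf : f ∈ K) (hΛ : Λ f = 0) : (Γ f : EReal) ≤ R :=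
    le_iSup₂_of_le f hf (le_iSup_of_le hΛ le_rfl)
  by_cases hR_top : R = ⊤
  · exact ⟨0, hR_top ▸ le_top⟩
  have hR_bot : R ≠ ⊥ := ne_bot_of_le_ne_bot (EReal.coe_ne_bot _) (hR_le 0 h0 (map_zero Λ))
  have hR : ((R.toReal : ℝ) : EReal) = R := EReal.coe_toReal hR_top hR_bot
  have hr (f : F) (hf : f ∈ K) (hΛ : Λ f = 0) : Γ f ≤ R.toReal := by
    rw [← EReal.coe_le_coe_iff, hR]
    exact hR_le f hf hΛ
  obtain ⟨L, hL⟩ := exists_linearMap_abs_sub_le_s14 hK h0 hsym hr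
  exact ⟨L, hR ▸ iSup₂_le fun f hf => EReal.coe_le_coe_iff.2 (hL f hf)⟩

lemma iSup_map_eq_zero_le_iSup_abs_sub (hsym : ∀ f ∈ K, -f ∈ K) (Δ : Y → ℝ) :
    (⨆ f ∈ K, ⨆ _ : Λ f = 0, (Γ f : EReal)) ≤ ⨆ f ∈ K, ((|Γ f - Δ (Λ f)| : ℝ) : EReal) := by
  refine iSup₂_le fun f hf => iSup_le fun hΛ => ?_
  have hΛ' : Λ (-f) = Λ f := by rw [map_neg, hΛ, neg_zero]
  have h : Γ f ≤ |Γ f - Δ (Λ f)| ∨ Γ f ≤ |Γ (-f) - Δ (Λ (-f))| := by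
    rw [hΛ', map_neg]
    rcases le_total (Δ (Λ f)) 0 with hΔ | hΔ
    · exact Or.inl (le_abs.2 (Or.inl (by linarith)))
    · exact Or.inr (le_abs.2 (Or.inr (by linarith)))
  rcases h with h | h
  · exact le_iSup₂_of_le f hf (EReal.coe_le_coe_iff.2 h)
  · exact le_iSup₂_of_le (-f) (hsym f hf) (EReal.coe_le_coe_iff.2 h)

end ScaledValues

/-- For a convex model set symmetric about the origin and a linear-functional quantity of
interest, a linear recovery map is genuinely optimal. -/
theorem stmt_14 {F : Type*} [AddCommGroup F] [Module ℝ F] {M : ℕ}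
    (K : Set F) (hK : Convex ℝ K) (hne : K.Nonempty)
    (hsym : ∀ f ∈ K, -f ∈ K)
    (lam : Fin M → F →ₗ[ℝ] ℝ) (Γ : F →ₗ[ℝ] ℝ) :
    ∃ c : Fin M → ℝ,
      ∀ Δ : (Fin M → ℝ) → ℝ,
        (⨆ f ∈ K, ((|Γ f - ∑ m, c m * lam m f| : ℝ) : EReal)) ≤
          ⨆ f ∈ K, ((|Γ f - Δ (fun m => lam m f)| : ℝ) : EReal) := by
  have h0 : (0 : F) ∈ K := ((balanced_iff_neg_mem hK).2 fun f => hsym f).zero_mem hne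
  let Λ : F →ₗ[ℝ] Fin M → ℝ := LinearMap.pi lam
  have hΛ (f : F) : (fun m => lam m f) = Λ f := rfl
  obtain ⟨L, hL⟩ := exists_linearMap_iSup_abs_sub_le (Γ := Γ) (Λ := Λ) hK h0 hsym
  refine ⟨fun m => L (Pi.single m 1), fun Δ => ?_⟩
  have hsum (f : F) : ∑ m, L (Pi.single m 1) * lam m f = L (Λ f) := by
    conv_rhs => rw [pi_eq_sum_univ' (Λ f), map_sum]
    simp only [map_smul, smul_eq_mul, ← hΛ, mul_comm]
  simp only [hsum, hΛ]
  exact hL.trans (iSup_map_eq_zero_le_iSup_abs_sub hsym Δ)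
end

section
/- Let F be a real vector space, K ⊆ F a convex set containing the origin, λ_1, …, λ_M ∈ F* linear functionals with λ(f) := (λ_1(f), …, λ_M(f)) ∈ ℝ^M, and Γ ∈ F* a linear functional. Then there exists c ∈ ℝ^M such that for every map Δ : ℝ^M → ℝ: sup_{f ∈ K} | Γ(f) − Σ_{m=1}^M c_m λ_m(f) | ≤ 2 · sup_{f ∈ K} | Γ(f) − Δ(λ(f)) | (suprema taken in the extended reals, with 2 · (+∞) = +∞). In other words, for a convex model set containing 0 and a linear-functional quantity of interest, a linear recovery map is near-optimal with factor 2. -/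
open scoped BigOperators Pointwise

/-!
Let `D = fiberOscillation K Γ λ` be the largest spread `Γ f₁ - Γ f₂` over pairs of points of `K`
carrying the same data `λ f₁ = λ f₂`. Any recovery map `Δ` errs by at least `D / 2` at one of the
two points of such a pair. Conversely, on the symmetric convex set `K - K` we have `Γ ≤ D` along
the common kernel `N` of the `λ_m`, so the M. Riesz extension theorem, applied to the cone over
`K - K` in `F × ℝ`, gives a linear `v` that agrees with `Γ` on `N` and satisfies `|v| ≤ D` on `K`.
Then `Γ - v` vanishes on `N`, hence equals some `∑ c_m λ_m`, and this linear recovery map has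
error at most `D`.
-/

section Extension

variable {E : Type*} [AddCommGroup E] [Module ℝ E]

def homogenization {B : Set E} (hB : Convex ℝ B) (h0 : (0 : E) ∈ B) : PointedCone ℝ (E × ℝ) where
  carrier := {p | 0 ≤ p.2 ∧ p.1 ∈ p.2 • B}
  zero_mem' := ⟨le_rfl, by simp [Set.zero_smul_set ⟨0, h0⟩]⟩
  add_mem' := by
    rintro ⟨x, s⟩ ⟨y, t⟩ ⟨hs, hx⟩ ⟨ht, hy⟩
    exact ⟨add_nonneg hs ht, (hB.add_smul hs ht).symm ▸ Set.add_mem_add hx hy⟩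
  smul_mem' := by
    rintro ⟨c, hc⟩ ⟨x, t⟩ ⟨ht, hx⟩
    refine ⟨mul_nonneg hc ht, ?_⟩
    change c • x ∈ (c * t) • B
    rw [mul_smul]
    exact Set.smul_mem_smul_set hx

theorem mem_homogenization {B : Set E} (hB : Convex ℝ B) (h0 : (0 : E) ∈ B) {p : E × ℝ} :
    p ∈ homogenization hB h0 ↔ 0 ≤ p.2 ∧ p.1 ∈ p.2 • B :=
  Iff.rfl

theorem exists_extension_le_on_convex_of_generating (N : Submodule ℝ E) {B : Set E}
    (hB : Convex ℝ B) (h0 : (0 : E) ∈ B) (Γ : E →ₗ[ℝ] ℝ) {e : ℝ}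
    (hΓ : ∀ h ∈ N, h ∈ B → Γ h ≤ e)
    (hgen : ∀ z, ∃ h ∈ N, ∃ c : ℝ, 0 ≤ c ∧ ∃ b ∈ B, z = h + c • b) :
    ∃ v : E →ₗ[ℝ] ℝ, (∀ h ∈ N, v h = Γ h) ∧ ∀ b ∈ B, v b ≤ e := by
  let f : (E × ℝ) →ₗ.[ℝ] ℝ :=
    ⟨N.prod ⊤, (e • LinearMap.snd ℝ E ℝ - Γ ∘ₗ LinearMap.fst ℝ E ℝ) ∘ₗ (N.prod ⊤).subtype⟩
  have hf : ∀ x : f.domain, f x = e * (x : E × ℝ).2 - Γ (x : E × ℝ).1 := fun _ => rfl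
  have nonneg : ∀ x : f.domain, (x : E × ℝ) ∈ homogenization hB h0 → 0 ≤ f x := by
    rintro ⟨⟨x, t⟩, hxN, -⟩ (⟨ht, hx⟩ : 0 ≤ t ∧ x ∈ t • B)
    obtain ⟨b, hb, rfl⟩ := Set.mem_smul_set.mp hx
    rw [hf, sub_nonneg, map_smul, smul_eq_mul, mul_comm e]
    rcases ht.eq_or_lt with rfl | htpos
    · simp
    · exact mul_le_mul_of_nonneg_left (hΓ b ((N.smul_mem_iff htpos.ne').mp hxN) hb) ht
  have dense : ∀ y, ∃ x : f.domain, (x : E × ℝ) + y ∈ homogenization hB h0 := by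
    rintro ⟨z, r⟩
    obtain ⟨h, hh, c, hc, b, hb, rfl⟩ := hgen z
    refine ⟨⟨(-h, c - r), N.neg_mem hh, trivial⟩, (mem_homogenization hB h0).mpr ?_⟩
    simpa [hc] using Set.smul_mem_smul_set hb
  obtain ⟨g, hgf, hg⟩ := riesz_extension (homogenization hB h0) f nonneg dense
  have hgN : ∀ h ∈ N, g (h, 0) = -Γ h := fun h hh => by
    simpa [hf] using hgf ⟨(h, 0), hh, trivial⟩
  have hg1 : g (0, 1) = e := by simpa [hf] using hgf ⟨(0, 1), N.zero_mem, trivial⟩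
  refine ⟨-(g ∘ₗ LinearMap.inl ℝ E ℝ), fun h hh => by simp [hgN h hh], fun b hb => ?_⟩
  have hb1 : 0 ≤ g (b, 1) := hg _ ⟨zero_le_one, by simpa using hb⟩
  have hsplit : g (b, 1) = g (b, 0) + g (0, 1) := by rw [← map_add, Prod.mk_add_mk]; simp
  simp only [LinearMap.neg_apply, LinearMap.comp_apply, LinearMap.inl_apply]
  linarith

theorem Convex.exists_smul_of_mem_span {B : Set E} (hB : Convex ℝ B) (h0 : (0 : E) ∈ B)
    (hneg : ∀ b ∈ B, -b ∈ B) {x : E} (hx : x ∈ Submodule.span ℝ B) :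
    ∃ c : ℝ, 0 ≤ c ∧ ∃ b ∈ B, x = c • b := by
  suffices ∃ c : ℝ, 0 ≤ c ∧ x ∈ c • B by
    obtain ⟨c, hc, b, hb, rfl⟩ := this
    exact ⟨c, hc, b, hb, rfl⟩
  induction hx using Submodule.span_induction with
  | mem x hx => exact ⟨1, zero_le_one, by rwa [one_smul]⟩
  | zero => exact ⟨0, le_rfl, Set.zero_mem_smul_set h0⟩
  | add x y _ _ hx hy =>
    obtain ⟨s, hs, hx⟩ := hx
    obtain ⟨t, ht, hy⟩ := hy
    exact ⟨s + t, add_nonneg hs ht, (hB.add_smul hs ht).symm ▸ Set.add_mem_add hx hy⟩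
  | smul r x _ hx =>
    obtain ⟨c, hc, b, hb, rfl⟩ := hx
    rcases le_total 0 r with hr | hr
    · exact ⟨r * c, mul_nonneg hr hc, b, hb, by rw [smul_smul]⟩
    · refine ⟨-r * c, mul_nonneg (neg_nonneg.mpr hr) hc, -b, hneg b hb, ?_⟩
      simp [smul_smul]

theorem exists_extension_le_on_symmetric_convex (N : Submodule ℝ E) {B : Set E}
    (hB : Convex ℝ B) (h0 : (0 : E) ∈ B) (hneg : ∀ b ∈ B, -b ∈ B) (Γ : E →ₗ[ℝ] ℝ) {e : ℝ}
    (hΓ : ∀ h ∈ N, h ∈ B → Γ h ≤ e) :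
    ∃ v : E →ₗ[ℝ] ℝ, (∀ h ∈ N, v h = Γ h) ∧ ∀ b ∈ B, v b ≤ e := by
  let G := N ⊔ Submodule.span ℝ B
  have hBG : ∀ b ∈ B, b ∈ G := fun b hb => Submodule.mem_sup_right (Submodule.subset_span hb)
  obtain ⟨v₀, hv₀N, hv₀B⟩ := exists_extension_le_on_convex_of_generating (N.comap G.subtype)
    (hB.linear_preimage G.subtype) (by simpa using h0) (Γ ∘ₗ G.subtype)
    (fun h hh hhB => hΓ h hh hhB) fun z => by
      obtain ⟨h, hh, s, hs, hz⟩ := Submodule.mem_sup.mp z.2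
      obtain ⟨c, hc, b, hb, rfl⟩ := hB.exists_smul_of_mem_span h0 hneg hs
      exact ⟨⟨h, Submodule.mem_sup_left hh⟩, hh, c, hc, ⟨b, hBG b hb⟩, hb, Subtype.ext hz.symm⟩
  obtain ⟨v, hv⟩ := LinearMap.exists_extend v₀
  have hvG : ∀ x (hx : x ∈ G), v x = v₀ ⟨x, hx⟩ := fun x hx => LinearMap.congr_fun hv ⟨x, hx⟩
  exact ⟨v, fun h hh => by rw [hvG h (Submodule.mem_sup_left hh)]; exact hv₀N _ hh,
    fun b hb => by rw [hvG b (hBG b hb)]; exact hv₀B _ hb⟩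

end Extension

theorem exists_abs_sub_sum_le_of_sub_le {F ι : Type*} [AddCommGroup F] [Module ℝ F] [Fintype ι]
    {K : Set F} (hK : Convex ℝ K) (h0 : (0 : F) ∈ K) (lam : ι → F →ₗ[ℝ] ℝ) (Γ : F →ₗ[ℝ] ℝ)
    {e : ℝ} (he : ∀ f₁ ∈ K, ∀ f₂ ∈ K, (∀ m, lam m f₁ = lam m f₂) → Γ f₁ - Γ f₂ ≤ e) :
    ∃ c : ι → ℝ, ∀ f ∈ K, |Γ f - ∑ m, c m * lam m f| ≤ e := by
  have hsub : ∀ f ∈ K, ∀ g ∈ K, f - g ∈ K - K := fun f hf g hg => Set.sub_mem_sub hf hg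
  obtain ⟨v, hvN, hvK⟩ := exists_extension_le_on_symmetric_convex (⨅ m, LinearMap.ker (lam m))
    (hK.sub hK) (by simpa using hsub 0 h0 0 h0)
    (by rintro _ ⟨f, hf, g, hg, rfl⟩; simpa using hsub g hg f hf) Γ (by
      rintro _ hN ⟨f, hf, g, hg, rfl⟩
      simp only [Submodule.mem_iInf, LinearMap.mem_ker, map_sub, sub_eq_zero] at hN
      simpa using he f hf g hg hN)
  have hspan : Γ - v ∈ Submodule.span ℝ (Set.range lam) := mem_span_of_iInf_ker_le_ker
    fun h hN => by simp [hvN h hN]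
  obtain ⟨c, hc⟩ := (Submodule.mem_span_range_iff_exists_fun ℝ).mp hspan
  have hΓv : ∀ f, Γ f - ∑ m, c m * lam m f = v f := fun f => by
    have := LinearMap.congr_fun hc f
    simp only [LinearMap.sum_apply, LinearMap.smul_apply, smul_eq_mul, LinearMap.sub_apply] at this
    linarith
  refine ⟨c, fun f hf => ?_⟩
  rw [hΓv, abs_le, neg_le, ← map_neg]
  exact ⟨hvK _ (by simpa using hsub 0 h0 f hf), hvK _ (by simpa using hsub f hf 0 h0)⟩

noncomputable def fiberOscillation {F Y : Type*} (K : Set F) (Γ : F → ℝ) (Λ : F → Y) : EReal :=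
  ⨆ f₁ ∈ K, ⨆ f₂ ∈ K, ⨆ (_ : Λ f₁ = Λ f₂), ((Γ f₁ - Γ f₂ : ℝ) : EReal)

section FiberOscillation

variable {F Y : Type*} {K : Set F} {Γ : F → ℝ} {Λ : F → Y}

theorem coe_sub_le_fiberOscillation {f₁ f₂ : F} (h₁ : f₁ ∈ K) (h₂ : f₂ ∈ K) (hΛ : Λ f₁ = Λ f₂) :
    ((Γ f₁ - Γ f₂ : ℝ) : EReal) ≤ fiberOscillation K Γ Λ :=
  le_iSup₂_of_le f₁ h₁ <| le_iSup₂_of_le f₂ h₂ <| le_iSup_of_le hΛ le_rfl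

theorem fiberOscillation_le_two_mul_iSup_abs_sub (Δ : Y → ℝ) :
    fiberOscillation K Γ Λ ≤ 2 * ⨆ f ∈ K, ((|Γ f - Δ (Λ f)| : ℝ) : EReal) := by
  refine iSup₂_le fun f₁ h₁ => iSup₂_le fun f₂ h₂ => iSup_le fun hΛ => ?_
  set S := ⨆ f ∈ K, ((|Γ f - Δ (Λ f)| : ℝ) : EReal)
  have hS : ∀ f ∈ K, ((|Γ f - Δ (Λ f)| : ℝ) : EReal) ≤ S := fun f hf =>
    le_iSup₂ (f := fun f (_ : f ∈ K) => ((|Γ f - Δ (Λ f)| : ℝ) : EReal)) f hf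
  have hS0 : 0 ≤ S := (EReal.coe_nonneg.mpr (abs_nonneg _)).trans (hS f₁ h₁)
  calc ((Γ f₁ - Γ f₂ : ℝ) : EReal)
      ≤ ((|Γ f₁ - Δ (Λ f₁)| + |Γ f₂ - Δ (Λ f₂)| : ℝ) : EReal) := by
        rw [EReal.coe_le_coe_iff, hΛ]
        linarith [le_abs_self (Γ f₁ - Δ (Λ f₂)), neg_abs_le (Γ f₂ - Δ (Λ f₂))]
    _ ≤ S + S := by rw [EReal.coe_add]; exact add_le_add (hS f₁ h₁) (hS f₂ h₂)
    _ = 2 * S := by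
        rw [← one_add_one_eq_two, EReal.right_distrib_of_nonneg zero_le_one zero_le_one, one_mul]

end FiberOscillation

theorem exists_iSup_abs_sub_sum_le_fiberOscillation {F ι : Type*} [AddCommGroup F] [Module ℝ F]
    [Fintype ι] {K : Set F} (hK : Convex ℝ K) (h0 : (0 : F) ∈ K) (lam : ι → F →ₗ[ℝ] ℝ)
    (Γ : F →ₗ[ℝ] ℝ) :
    ∃ c : ι → ℝ, (⨆ f ∈ K, ((|Γ f - ∑ m, c m * lam m f| : ℝ) : EReal)) ≤
      fiberOscillation K Γ (fun f m => lam m f) := by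
  set D := fiberOscillation K Γ (fun f m => lam m f)
  by_cases hD : D = ⊤
  · exact ⟨0, hD ▸ le_top⟩
  have hD0 : 0 ≤ D := by simpa using coe_sub_le_fiberOscillation (Γ := Γ) h0 h0 rfl
  obtain ⟨c, hc⟩ := exists_abs_sub_sum_le_of_sub_le hK h0 lam Γ (e := D.toReal)
    fun f₁ h₁ f₂ h₂ hm => EReal.coe_le_coe_iff.mp <|
      (coe_sub_le_fiberOscillation h₁ h₂ (funext hm)).trans (EReal.le_coe_toReal hD)
  exact ⟨c, iSup₂_le fun f hf => (EReal.coe_le_coe_iff.mpr (hc f hf)).trans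
    (EReal.coe_toReal_le (ne_bot_of_le_ne_bot EReal.zero_ne_bot hD0))⟩

/-- For a convex model set containing the origin and a linear-functional quantity of
interest, a linear recovery map is near-optimal with factor 2. -/
theorem stmt_15 {F : Type*} [AddCommGroup F] [Module ℝ F] {M : ℕ}
    (K : Set F) (hK : Convex ℝ K) (h0 : (0 : F) ∈ K)
    (lam : Fin M → F →ₗ[ℝ] ℝ) (Γ : F →ₗ[ℝ] ℝ) :
    ∃ c : Fin M → ℝ,
      ∀ Δ : (Fin M → ℝ) → ℝ,
        (⨆ f ∈ K, ((|Γ f - ∑ m, c m * lam m f| : ℝ) : EReal)) ≤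
          (2 : EReal) * ⨆ f ∈ K, ((|Γ f - Δ (fun m => lam m f)| : ℝ) : EReal) := by
  obtain ⟨c, hc⟩ := exists_iSup_abs_sub_sum_le_fiberOscillation hK h0 lam Γ
  exact ⟨c, fun Δ => hc.trans (fiberOscillation_le_two_mul_iSup_abs_sub Δ)⟩
end
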